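/- Let s ≥ 2 and let P_m be a dyadic digital (t_m, m, s)-net in base 2 with t_m ≤ (1/10)·log₂ m. Put Ṡ_m = ∑_{k=1}^m 𝔇_k and ρ̇_m² = E^{(m)}_{Y,T}(Ṡ_m²). Then there exists m_0 (depending only on s) such that for all m ≥ m_0, ρ̇_m² ≥ 2^{-2s-4} s^{-s+1} m^{s-1}. -/

import Mathlib

open MeasureTheory Filter

noncomputable section

attribute [local instance] Classical.propDecidable

/-- The `a`-th binary digit (`a ≥ 1`) of the dyadic expansion of `x ∈ [0,1)`
(the finite expansion is used for dyadic rationals). -/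
def bdigit (a : ℕ) (x : ℝ) : ℕ := (⌊x * 2 ^ a⌋).toNat % 2

/-- Digitwise addition modulo 2 of dyadic expansions: `x ⊕ y`. -/
def xorReal (x y : ℝ) : ℝ :=
  ∑' a : ℕ, (((bdigit (a + 1) x + bdigit (a + 1) y) % 2 : ℕ) : ℝ) / 2 ^ (a + 1)

/-- Coordinatewise digitwise addition `⊕` on vectors. -/
def xorVec {s : ℕ} (X Y : Fin s → ℝ) : Fin s → ℝ := fun i => xorReal (X i) (Y i)

/-- Local discrepancy `D(P, Y)` of a finite point set `P` in `[0,1)^s`. -/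
def Dloc {N s : ℕ} (P : Fin N → Fin s → ℝ) (Y : Fin s → ℝ) : ℝ :=
  (∑ n : Fin N, if ∀ i, 0 ≤ P n i ∧ P n i < Y i then (1 : ℝ) else 0) -
    (N : ℝ) * ∏ i, Y i

/-- `P` is a `(t,m,s)`-net in base 2: every elementary dyadic box of volume
`2^(t-m)` contains exactly `2^t` of the points. -/
def IsNet (t m s : ℕ) (P : Fin (2 ^ m) → Fin s → ℝ) : Prop :=
  ∀ d a : Fin s → ℕ, (∀ i, a i < 2 ^ d i) → (∑ i, d i) + t = m →
    (Finset.univ.filter fun n => ∀ i,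
        (a i : ℝ) / 2 ^ d i ≤ P n i ∧ P n i < ((a i : ℝ) + 1) / 2 ^ d i).card = 2 ^ t

/-- The digits `x_{n,i,j}` of the `n`-th point of the dyadic digital net with
generating matrices `C`. -/
def netDig (m s : ℕ) (C : Fin s → Matrix (Fin m) (Fin m) (ZMod 2)) (n : ℕ) :
    Fin s → Fin m → ZMod 2 :=
  fun i j => ∑ r : Fin m, C i j r * (if n.testBit r then 1 else 0)

/-- The `n`-th point of the dyadic digital net with generating matrices `C`. -/
def netPoint (m s : ℕ) (C : Fin s → Matrix (Fin m) (Fin m) (ZMod 2)) (n : ℕ) :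
    Fin s → ℝ :=
  fun i => ∑ j : Fin m, ((netDig m s C n i j).val : ℝ) / 2 ^ ((j : ℕ) + 1)

/-- The unit cube `[0,1]^s`. -/
def cube (s : ℕ) : Set (Fin s → ℝ) := Set.univ.pi fun _ => Set.Icc (0 : ℝ) 1

/-- The point of `Q^s(2^m)` with coordinates `T i / 2^m`. -/
def Qpt {s : ℕ} (m : ℕ) (T : Fin s → Fin (2 ^ m)) : Fin s → ℝ :=
  fun i => ((T i : ℕ) : ℝ) / 2 ^ m

/-- `M_{s,p}(P) = (2^{-sm} ∑_{T ∈ Q^s(2^m)} ∫_{[0,1]^s} |D(P ⊕ T, Y)|^p dY)^{1/p}`. -/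
def Msp (s m : ℕ) (p : ℝ) {N : ℕ} (P : Fin N → Fin s → ℝ) : ℝ :=
  ((2 : ℝ) ^ (-(s * m : ℤ)) * ∑ T : Fin s → Fin (2 ^ m),
      ∫ Y in cube s, |Dloc (fun n => xorVec (P n) (Qpt m T)) Y| ^ p) ^ (1 / p)

/-- The standard normal distribution function `Φ`. -/
def PhiCDF (w : ℝ) : ℝ :=
  (Real.sqrt (2 * Real.pi))⁻¹ * ∫ u in Set.Iio w, Real.exp (-u ^ 2 / 2)

/-- `χ_p`, the `p`-th absolute moment of the standard Gaussian. -/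
def chiMoment (p : ℝ) : ℝ :=
  (Real.sqrt (2 * Real.pi))⁻¹ * ∫ u : ℝ, |u| ^ p * Real.exp (-u ^ 2 / 2)

/-- Digits `y_{n,i,j}` of the points of the dyadic digital sequence generated by
the `ℕ × ℕ` matrices `C` over `F_2`. -/
def seqDig (s : ℕ) (C : Fin s → ℕ → ℕ → ZMod 2) (n : ℕ) : Fin s → ℕ → ZMod 2 :=
  fun i j => ∑ r ∈ Finset.range (n + 1), C i j r * (if n.testBit r then 1 else 0)

/-- The `n`-th point of the dyadic digital sequence generated by `C`. -/
def seqPoint (s : ℕ) (C : Fin s → ℕ → ℕ → ZMod 2) (n : ℕ) : Fin s → ℝ :=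
  fun i => ∑' j : ℕ, ((seqDig s C n i j).val : ℝ) / 2 ^ (j + 1)

/-- The digital sequence generated by `C` is a dyadic digital `(T,s)`-sequence:
for all `m ≥ 1` and `k ≥ 0` the block `X_{k2^m}, …, X_{k2^m+2^m-1}` is a
`(T(m),m,s)`-net in base 2. -/
def IsTSeq (s : ℕ) (Tf : ℕ → ℕ) (C : Fin s → ℕ → ℕ → ZMod 2) : Prop :=
  (∀ m, Tf m ≤ m) ∧
  ∀ m, 1 ≤ m → ∀ k : ℕ,
    IsNet (Tf m) m s fun n : Fin (2 ^ m) => seqPoint s C (k * 2 ^ m + (n : ℕ))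

/-- The dual net `P_m^⊥` of the digital net generated by `C`. -/
def dualNet (m s : ℕ) (C : Fin s → Matrix (Fin m) (Fin m) (ZMod 2)) :
    Finset (Fin s → Fin m → ZMod 2) :=
  Finset.univ.filter fun mm => ∀ n : Fin (2 ^ m),
    (∑ i, ∑ j, mm i j * netDig m s C (n : ℕ) i j) = 0

/-- `ρ(b)`: the position of the last nonzero digit (`ρ(0) = 0`). -/
def rhoF {m : ℕ} (b : Fin m → ZMod 2) : ℕ :=
  (Finset.univ.filter fun j => b j ≠ 0).sup fun j => (j : ℕ) + 1

/-- The 1-indexed component `𝔪_{i,a}` (as `0` or `1`), with the convention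
`𝔪_{i,0} = 0`. -/
def mAt {m : ℕ} (b : Fin m → ZMod 2) (a : ℕ) : ℕ :=
  if h : 1 ≤ a ∧ a ≤ m then (b ⟨a - 1, by omega⟩).val else 0

/-- The 1-indexed digit of a digit array, with the convention that digit `0`
and digits beyond `m` are `0`. -/
def dAt {m : ℕ} (y : Fin m → Fin 2) (a : ℕ) : ℕ :=
  if h : 1 ≤ a ∧ a ≤ m then (y ⟨a - 1, by omega⟩).val else 0

/-- `κ(A)`: the number of nonzero entries of `A`. -/
def kapF {s : ℕ} (A : Fin s → ℕ) : ℕ := (Finset.univ.filter fun i => A i ≠ 0).card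

/-- `a₀(A) = a₁ + ⋯ + a_s`. -/
def a0F {s : ℕ} (A : Fin s → ℕ) : ℕ := ∑ i, A i

/-- `Λ_A(T ⊕ Y^{(m)})` as a function of the digit arrays `t`, `y` of `T`, `Y`:
`∑_{𝔪 ∈ P^{⊥,*}, ρ(𝔪_i) ≤ a_i} e(∑_i (∑_j 𝔪_{i,j}(t_{i,j}+y_{i,j}) + 𝔪_{i,a_i}))`,
where `e(n) = exp(πin) = (-1)^n`. -/
def LamF (m s : ℕ) (C : Fin s → Matrix (Fin m) (Fin m) (ZMod 2)) (A : Fin s → ℕ)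
    (t y : Fin s → Fin m → Fin 2) : ℝ :=
  ∑ mm ∈ (dualNet m s C).filter fun mm => mm ≠ 0 ∧ ∀ i, rhoF (mm i) ≤ A i,
    (-1 : ℝ) ^
      (∑ i, ((∑ j, (mm i j).val * ((t i j : ℕ) + (y i j : ℕ))) + mAt (mm i) (A i)))

/-- The Rademacher function `r_A(Y)` as a function of the digit array of `Y`. -/
def rademF {m s : ℕ} (A : Fin s → ℕ) (y : Fin s → Fin m → Fin 2) : ℝ :=
  ∏ i, (-1 : ℝ) ^ dAt (y i) (A i)

/-- `Ψ_A = (-1)^{κ(A)} 2^{m-s-a₀(A)} r_A(Y) Λ_A(T ⊕ Y^{(m)})` at digit level. -/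
def PsiF (m s : ℕ) (C : Fin s → Matrix (Fin m) (Fin m) (ZMod 2)) (A : Fin s → ℕ)
    (t y : Fin s → Fin m → Fin 2) : ℝ :=
  (-1 : ℝ) ^ kapF A * (2 : ℝ) ^ ((m : ℤ) - (s : ℤ) - (a0F A : ℤ)) *
    rademF A y * LamF m s C A t y

/-- `V₀ = 10 log₂ m`. -/
def V0 (m : ℕ) : ℝ := 10 * Real.logb 2 m

/-- `I_{m,s,k} = {A ∈ I_m^s : max_i a_i = k, a₀(A) ∈ (m - t_m, m + V₀)}`. -/
def IndexSet (m s tm k : ℕ) : Finset (Fin s → ℕ) :=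
  (Fintype.piFinset fun _ : Fin s => Finset.range (m + 1)).filter fun A =>
    Finset.univ.sup A = k ∧ ((m : ℝ) - tm < a0F A ∧ (a0F A : ℝ) < m + V0 m)

/-- `I_{m,s,m+1} = {A ∈ I_m^s : a₀(A) ≥ m + V₀}`. -/
def IndexTail (m s : ℕ) : Finset (Fin s → ℕ) :=
  (Fintype.piFinset fun _ : Fin s => Finset.range (m + 1)).filter fun A =>
    (m : ℝ) + V0 m ≤ (a0F A : ℝ)

/-- `𝔇_k(T,Y) = ∑_{A ∈ I_{m,s,k}} Ψ_A` at digit level. -/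
def DDk (m s tm : ℕ) (C : Fin s → Matrix (Fin m) (Fin m) (ZMod 2)) (k : ℕ)
    (t y : Fin s → Fin m → Fin 2) : ℝ :=
  ∑ A ∈ IndexSet m s tm k, PsiF m s C A t y

/-- `R(T,Y) = ∑_{A ∈ I_{m,s,m+1}} Ψ_A` at digit level. -/
def Rtail (m s : ℕ) (C : Fin s → Matrix (Fin m) (Fin m) (ZMod 2))
    (t y : Fin s → Fin m → Fin 2) : ℝ :=
  ∑ A ∈ IndexTail m s, PsiF m s C A t y

/-- `E^{(m)}_{Y,T}(f)`: the average of `f` over all digit arrays. -/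
def Em (m s : ℕ) (f : (Fin s → Fin m → Fin 2) → (Fin s → Fin m → Fin 2) → ℝ) : ℝ :=
  (2 : ℝ) ^ (-(2 * s * m : ℤ)) *
    ∑ t : Fin s → Fin m → Fin 2, ∑ y : Fin s → Fin m → Fin 2, f t y

/-- Keep the first `k` digits of `t`, replace the remaining ones by those of `t'`. -/
def mergeDig {m s : ℕ} (k : ℕ) (t t' : Fin s → Fin m → Fin 2) :
    Fin s → Fin m → Fin 2 :=
  fun i j => if (j : ℕ) < k then t i j else t' i j

/-- The conditional expectation `E^{(m)}_{Y,T}(f | F_k)` with respect to the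
σ-field `F_k` generated by the dyadic cubes of side `2^{-k}`: the average of `f`
over the digits of index `> k`, as a function of the digit arrays `t`, `y`. -/
def EmCond (m s k : ℕ)
    (f : (Fin s → Fin m → Fin 2) → (Fin s → Fin m → Fin 2) → ℝ)
    (t y : Fin s → Fin m → Fin 2) : ℝ :=
  (2 : ℝ) ^ (-(2 * s * m : ℤ)) *
    ∑ t' : Fin s → Fin m → Fin 2, ∑ y' : Fin s → Fin m → Fin 2,
      f (mergeDig k t t') (mergeDig k y y')

/-- `Θ_{A₁,A₂,k} = E^{(m)}_{Y,T}(Ψ_{A₁}Ψ_{A₂} | F_{k-1}) - E^{(m)}_{Y,T}(Ψ_{A₁}Ψ_{A₂})`. -/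
def ThetaF (m s : ℕ) (C : Fin s → Matrix (Fin m) (Fin m) (ZMod 2))
    (A1 A2 : Fin s → ℕ) (k : ℕ) (t y : Fin s → Fin m → Fin 2) : ℝ :=
  EmCond m s (k - 1) (fun t' y' => PsiF m s C A1 t' y' * PsiF m s C A2 t' y') t y -
    Em m s fun t' y' => PsiF m s C A1 t' y' * PsiF m s C A2 t' y'

/-- `Υ_{d₁,d₂,d₃,J,k}` for a partition `J = (J₁,J₂,J₃)` of `{1,…,s}` and
`k = (k₁,k₂)`. -/
def Ups (m s tm : ℕ) (C : Fin s → Matrix (Fin m) (Fin m) (ZMod 2))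
    (J1 J2 J3 : Finset (Fin s)) (k1 k2 : ℕ) : ℝ :=
  ∑ A1 ∈ IndexSet m s tm k1, ∑ A2 ∈ IndexSet m s tm k1,
    ∑ A3 ∈ IndexSet m s tm k2, ∑ A4 ∈ IndexSet m s tm k2,
      (Em m s fun t y => ThetaF m s C A1 A2 k1 t y * ThetaF m s C A3 A4 k2 t y) *
        (if (Finset.univ.filter fun i => A1 i = A2 i) = J1 ∧
            (Finset.univ.filter fun i => A1 i < A2 i) = J2 ∧
            (Finset.univ.filter fun i => A2 i < A1 i) = J3 ∧
            (Finset.univ.filter fun i => A3 i = A4 i) = J1 ∧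
            (Finset.univ.filter fun i => A3 i < A4 i) = J2 ∧
            (Finset.univ.filter fun i => A4 i < A3 i) = J3 then (1 : ℝ) else 0)

/-- The array of the first `m` dyadic digits of the coordinates of `Y`. -/
def digitsOf (m s : ℕ) (Y : Fin s → ℝ) : Fin s → Fin m → Fin 2 :=
  fun i j => ⟨bdigit ((j : ℕ) + 1) (Y i), by unfold bdigit; omega⟩

/-- Truncation `y^{(m)}` to the first `m` dyadic digits. -/
def truncR (m : ℕ) (y : ℝ) : ℝ :=
  ∑ j ∈ Finset.range m, (bdigit (j + 1) y : ℝ) / 2 ^ (j + 1)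

/-- The elementary interval `Π_a` (`Π_0 = [0,1)`, `Π_a = [2^{-a}, 2^{1-a})`). -/
def PiBox (a : ℕ) : Set ℝ :=
  if a = 0 then Set.Ico 0 1 else Set.Ico ((2 : ℝ) ^ (-(a : ℤ))) ((2 : ℝ) ^ (1 - (a : ℤ)))

/-- `λ_A(Y) = 1_{Π_A}(Y) - vol(Π_A)`. -/
def lamA {s : ℕ} (A : Fin s → ℕ) (Y : Fin s → ℝ) : ℝ :=
  (if ∀ i, Y i ∈ PiBox (A i) then (1 : ℝ) else 0) - (2 : ℝ) ^ (-(a0F A : ℤ))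

/-- The micro-local discrepancy `λ_A(P_m^{(m)} ⊕ T ⊕ Y^{(m)})`. -/
def lamNet (m s : ℕ) (C : Fin s → Matrix (Fin m) (Fin m) (ZMod 2))
    (T Y : Fin s → ℝ) (A : Fin s → ℕ) : ℝ :=
  ∑ n : Fin (2 ^ m),
    lamA A fun i =>
      xorReal (xorReal (truncR m (netPoint m s C (n : ℕ) i)) (T i)) (truncR m (Y i))

/-- The Rademacher function `r_A(Y)` for a real point `Y`. -/
def rademReal {s : ℕ} (A : Fin s → ℕ) (Y : Fin s → ℝ) : ℝ :=
  ∏ i, if A i = 0 then (1 : ℝ) else 1 - 2 * (bdigit (A i) (Y i) : ℝ)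

/-- The truncated discrepancy
`D^{(m)}(P_m ⊕ T, Y) = 2^{-s} ∑_{A ∈ I_m^s} (-1)^{κ(A)} λ_A(P_m^{(m)} ⊕ T ⊕ Y^{(m)}) r_A(Y)`. -/
def Dm (m s : ℕ) (C : Fin s → Matrix (Fin m) (Fin m) (ZMod 2)) (T Y : Fin s → ℝ) : ℝ :=
  (2 : ℝ) ^ (-(s : ℤ)) *
    ∑ A ∈ Fintype.piFinset fun _ : Fin s => Finset.range (m + 1),
      (-1 : ℝ) ^ kapF A * lamNet m s C T Y A * rademReal A Y

/-- `𝔼_{Y,T,m}(f) = 2^{-sm} ∑_{T ∈ Q^s(2^m)} ∫_{[0,1]^s} f(T,Y) dY`. -/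
def EE (m s : ℕ) (f : (Fin s → ℝ) → (Fin s → ℝ) → ℝ) : ℝ :=
  (2 : ℝ) ^ (-(s * m : ℤ)) * ∑ T : Fin s → Fin (2 ^ m), ∫ Y in cube s, f (Qpt m T) Y

/-! Expanding `Ψ_A` in Walsh characters `(-1)^{⟨w,t⟩}` of the digit arrays `(t, y)` shows that
the `Ψ_A` for distinct `A` are orthogonal and that `E(Ψ_A²) = #{𝔪 ∈ P^{⊥,*} : ρ(𝔪_i) ≤ a_i} ·
4^{m-s-a₀(A)}`, so `ρ̇_m²` is a sum of nonnegative terms. If `a₀(A) = m + 1`, the box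
`{𝔪 : ρ(𝔪_i) ≤ a_i}` has `2^{m+1}` elements while `𝔪 ↦ (∑_{i,j} 𝔪_{i,j} C_i(j,r))_r` takes at most
`2^m` values, so the box contains a nonzero dual vector and the term is at least `2^{-2s-2}`.
There are at least `⌊m/s⌋^{s-1}` such `A`, and Bernoulli's inequality turns this count into
`m^{s-1} / (4 s^{s-1})` once `m ≥ 2s²`. -/

open Finset

section SignCharacter

variable {ι κ : Type*} [Fintype ι] [Fintype κ]

def signChar (w : ι → κ → ℕ) (x : ι → κ → Fin 2) : ℝ :=
  (-1) ^ ∑ i, ∑ j, w i j * (x i j : ℕ)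

lemma signChar_add (w w' : ι → κ → ℕ) (x : ι → κ → Fin 2) :
    signChar (w + w') x = signChar w x * signChar w' x := by
  simp only [signChar, Pi.add_apply, add_mul, sum_add_distrib, pow_add]

lemma sum_neg_one_pow_mul_fin_two (c : ℕ) :
    ∑ b : Fin 2, (-1 : ℝ) ^ (c * (b : ℕ)) = if Even c then 2 else 0 := by
  rcases Nat.even_or_odd c with h | h
  · simp [h]
  · simp [Fin.sum_univ_two, h.neg_one_pow, Nat.not_even_iff_odd.mpr h]

lemma sum_signChar [DecidableEq ι] [DecidableEq κ] (w : ι → κ → ℕ) :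
    ∑ x, signChar w x =
      if ∀ i j, Even (w i j) then 2 ^ (Fintype.card ι * Fintype.card κ) else 0 := by
  have factor : ∑ x, signChar w x = ∏ i, ∏ j, ∑ b : Fin 2, (-1 : ℝ) ^ (w i j * (b : ℕ)) := by
    simp only [signChar, ← prod_pow_eq_pow_sum, Fintype.prod_sum]
  simp only [factor, sum_neg_one_pow_mul_fin_two, Fintype.prod_ite_zero, prod_const, card_univ,
    ← pow_mul]
  by_cases h : ∀ i j, Even (w i j)
  · simp [h, mul_comm]
  · simp [h]

end SignCharacter

section

variable {m s : ℕ}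

lemma em_sum {β : Type*} (I : Finset β)
    (f : β → (Fin s → Fin m → Fin 2) → (Fin s → Fin m → Fin 2) → ℝ) :
    Em m s (fun t y => ∑ b ∈ I, f b t y) = ∑ b ∈ I, Em m s (f b) := by
  simp only [Em, ← mul_sum]
  exact congrArg _ ((sum_congr rfl fun _ _ => sum_comm).trans sum_comm)

lemma em_const_mul (c : ℝ) (f : (Fin s → Fin m → Fin 2) → (Fin s → Fin m → Fin 2) → ℝ) :
    Em m s (fun t y => c * f t y) = c * Em m s f := by
  simp only [Em, ← mul_sum]
  ring

lemma em_signChar_mul_signChar (u v : Fin s → Fin m → ℕ) :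
    Em m s (fun t y => signChar u t * signChar v y) =
      if (∀ i j, Even (u i j)) ∧ ∀ i j, Even (v i j) then 1 else 0 := by
  rw [Em, ← sum_mul_sum, sum_signChar, sum_signChar]
  simp only [Fintype.card_fin]
  by_cases hu : ∀ i j, Even (u i j)
  · by_cases hv : ∀ i j, Even (v i j)
    · rw [if_pos hu, if_pos hv, if_pos ⟨hu, hv⟩, ← pow_add, ← zpow_natCast,
        ← zpow_add₀ two_ne_zero]
      push_cast
      ring_nf
      exact zpow_zero 2
    · simp [hv]
  · simp [hu]

def dualBox (m s : ℕ) (C : Fin s → Matrix (Fin m) (Fin m) (ZMod 2)) (A : Fin s → ℕ) :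
    Finset (Fin s → Fin m → ZMod 2) :=
  (dualNet m s C).filter fun mm => mm ≠ 0 ∧ ∀ i, rhoF (mm i) ≤ A i

def dualWeight (m s : ℕ) (C : Fin s → Matrix (Fin m) (Fin m) (ZMod 2)) (A : Fin s → ℕ) : ℝ :=
  #(dualBox m s C A) * ((2 : ℝ) ^ ((m : ℤ) - s - a0F A)) ^ 2

def digitVal (mm : Fin s → Fin m → ZMod 2) : Fin s → Fin m → ℕ := fun i j => (mm i j).val

def digitSelector (A : Fin s → ℕ) : Fin s → Fin m → ℕ :=
  fun i j => if (j : ℕ) + 1 = A i then 1 else 0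

lemma dAt_eq_sum {a : ℕ} (ha : a ≤ m) (y : Fin m → Fin 2) :
    dAt y a = ∑ j : Fin m, (if (j : ℕ) + 1 = a then 1 else 0) * (y j : ℕ) := by
  unfold dAt
  split_ifs with h
  · rw [sum_eq_single ⟨a - 1, by omega⟩ (fun j _ hj => by
      rw [if_neg fun h => hj (Fin.ext (by simp; omega)), zero_mul])
      (by simp), if_pos (by simp; omega), one_mul]
  · exact (sum_eq_zero fun j _ => by rw [if_neg (by omega), zero_mul]).symm

lemma rademF_eq_signChar {A : Fin s → ℕ} (hA : ∀ i, A i ≤ m) (y : Fin s → Fin m → Fin 2) :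
    rademF A y = signChar (digitSelector A) y := by
  simp only [rademF, signChar, prod_pow_eq_pow_sum, digitSelector, dAt_eq_sum (hA _)]

lemma psiF_eq_sum_signChar (C : Fin s → Matrix (Fin m) (Fin m) (ZMod 2)) {A : Fin s → ℕ}
    (hA : ∀ i, A i ≤ m) (t y : Fin s → Fin m → Fin 2) :
    PsiF m s C A t y = ∑ mm ∈ dualBox m s C A,
      (-1 : ℝ) ^ kapF A * 2 ^ ((m : ℤ) - s - a0F A) * (-1) ^ (∑ i, mAt (mm i) (A i)) *
        (signChar (digitVal mm) t * signChar (digitVal mm + digitSelector A) y) := by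
  rw [PsiF, LamF, rademF_eq_signChar hA, mul_sum]
  refine sum_congr rfl fun mm _ => ?_
  rw [signChar_add]
  simp only [signChar, digitVal, mul_add, sum_add_distrib, pow_add]
  ring

lemma forall_even_digitVal_add_iff (mm mm' : Fin s → Fin m → ZMod 2) :
    (∀ i j, Even (digitVal mm i j + digitVal mm' i j)) ↔ mm = mm' := by
  have h : ∀ a b : ZMod 2, Even (a.val + b.val) ↔ a = b := by decide
  simp only [digitVal, h, funext_iff]

lemma forall_even_digitSelector_add_iff {A B : Fin s → ℕ} (hA : ∀ i, A i ≤ m)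
    (hB : ∀ i, B i ≤ m) :
    (∀ i j, Even (digitSelector (m := m) A i j + digitSelector B i j)) ↔ A = B := by
  refine ⟨fun h => funext fun i => ?_, fun h i j => h ▸ ⟨_, rfl⟩⟩
  by_contra hne
  have hj := h i ⟨max (A i) (B i) - 1, by have := hA i; have := hB i; omega⟩
  simp only [digitSelector, Nat.even_iff] at hj
  split_ifs at hj <;> omega

lemma signChar_orthogonality_iff {A B : Fin s → ℕ} (hA : ∀ i, A i ≤ m) (hB : ∀ i, B i ≤ m)
    (mm mm' : Fin s → Fin m → ZMod 2) :
    ((∀ i j, Even ((digitVal mm + digitVal mm' : Fin s → Fin m → ℕ) i j)) ∧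
      ∀ i j, Even ((digitVal mm + digitSelector A + (digitVal mm' + digitSelector B) :
        Fin s → Fin m → ℕ) i j)) ↔
      mm = mm' ∧ A = B := by
  rw [← forall_even_digitVal_add_iff, ← forall_even_digitSelector_add_iff hA hB]
  simp only [Pi.add_apply, ← forall_and, Nat.even_iff]
  exact forall_congr' fun i => forall_congr' fun j => by omega

lemma em_psiF_mul_psiF (C : Fin s → Matrix (Fin m) (Fin m) (ZMod 2)) {A B : Fin s → ℕ}
    (hA : ∀ i, A i ≤ m) (hB : ∀ i, B i ≤ m) :
    Em m s (fun t y => PsiF m s C A t y * PsiF m s C B t y) =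
      if A = B then dualWeight m s C A else 0 := by
  have em_term : ∀ (a b : ℝ) (u v u' v' : Fin s → Fin m → ℕ),
      Em m s (fun t y => a * (signChar u t * signChar v y) * (b * (signChar u' t * signChar v' y)))
        = a * b * Em m s (fun t y => signChar (u + u') t * signChar (v + v') y) := by
    intro a b u v u' v'
    rw [← em_const_mul]
    congr 1
    ext t y
    rw [signChar_add, signChar_add]
    ring
  simp only [psiF_eq_sum_signChar C hA, psiF_eq_sum_signChar C hB, sum_mul_sum, em_sum, em_term,
    em_signChar_mul_signChar, signChar_orthogonality_iff hA hB]
  split_ifs with hAB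
  · subst hAB
    have sign_sq : ∀ k : ℕ, (-1 : ℝ) ^ k * (-1) ^ k = 1 := fun k => by
      rw [← mul_pow, neg_one_mul, neg_neg, one_pow]
    simp only [and_true, mul_ite, mul_one, mul_zero, sum_ite_eq, sum_ite_mem, inter_self]
    rw [dualWeight, ← nsmul_eq_mul, ← sum_const]
    refine sum_congr rfl fun mm _ => ?_
    linear_combination (((2 : ℝ) ^ ((m : ℤ) - s - a0F A)) ^ 2 * (-1) ^ kapF A * (-1) ^ kapF A) *
      sign_sq (∑ i, mAt (mm i) (A i)) + ((2 : ℝ) ^ ((m : ℤ) - s - a0F A)) ^ 2 * sign_sq (kapF A)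
  · simp [hAB]

lemma em_sq_sum_psiF (C : Fin s → Matrix (Fin m) (Fin m) (ZMod 2)) (I : Finset (Fin s → ℕ))
    (hI : ∀ A ∈ I, ∀ i, A i ≤ m) :
    Em m s (fun t y => (∑ A ∈ I, PsiF m s C A t y) ^ 2) =
      ∑ A ∈ I, dualWeight m s C A := by
  simp only [sq, sum_mul_sum, em_sum]
  refine sum_congr rfl fun A hA => ?_
  rw [sum_congr rfl fun B hB => em_psiF_mul_psiF C (hI A hA) (hI B hB), sum_ite_eq, if_pos hA]

lemma le_of_mem_piFinset_range {A : Fin s → ℕ}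
    (h : A ∈ Fintype.piFinset fun _ : Fin s => range (m + 1)) (i : Fin s) : A i ≤ m :=
  Nat.lt_succ_iff.mp (mem_range.mp (Fintype.mem_piFinset.mp h i))

lemma le_of_mem_indexSet {tm k : ℕ} {A : Fin s → ℕ} (h : A ∈ IndexSet m s tm k) (i : Fin s) :
    A i ≤ m :=
  le_of_mem_piFinset_range (mem_filter.mp h).1 i

lemma sum_DDk_eq_sum_psiF (tm : ℕ) (C : Fin s → Matrix (Fin m) (Fin m) (ZMod 2))
    (t y : Fin s → Fin m → Fin 2) :
    ∑ k ∈ Icc 1 m, DDk m s tm C k t y =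
      ∑ A ∈ (Icc 1 m).biUnion (IndexSet m s tm), PsiF m s C A t y := by
  refine (sum_biUnion fun k _ k' _ hne => disjoint_left.mpr fun A hk hk' => hne ?_).symm
  rw [← (mem_filter.mp hk).2.1, ← (mem_filter.mp hk').2.1]

lemma em_sq_sum_DDk (tm : ℕ) (C : Fin s → Matrix (Fin m) (Fin m) (ZMod 2)) :
    Em m s (fun t y => (∑ k ∈ Icc 1 m, DDk m s tm C k t y) ^ 2) =
      ∑ A ∈ (Icc 1 m).biUnion (IndexSet m s tm), dualWeight m s C A := by
  simp only [sum_DDk_eq_sum_psiF]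
  refine em_sq_sum_psiF C _ fun A hA => ?_
  obtain ⟨k, -, hk⟩ := mem_biUnion.mp hA
  exact le_of_mem_indexSet hk

lemma mem_dualNet_iff (C : Fin s → Matrix (Fin m) (Fin m) (ZMod 2))
    (mm : Fin s → Fin m → ZMod 2) :
    mm ∈ dualNet m s C ↔ ∀ r : Fin m, ∑ i, ∑ j, mm i j * C i j r = 0 := by
  have expand : ∀ n : ℕ, ∑ i, ∑ j, mm i j * netDig m s C n i j =
      ∑ r : Fin m, (∑ i, ∑ j, mm i j * C i j r) * if n.testBit r then 1 else 0 := by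
    intro n
    simp only [netDig, mul_sum, sum_mul, mul_assoc]
    exact (sum_congr rfl fun _ _ => sum_comm).trans sum_comm
  simp only [dualNet, mem_filter, mem_univ, true_and, expand]
  refine ⟨fun h r => ?_, fun h n => sum_eq_zero fun r _ => by rw [h r, zero_mul]⟩
  simpa [Nat.testBit_two_pow, Fin.val_inj] using
    h ⟨2 ^ (r : ℕ), Nat.pow_lt_pow_right one_lt_two r.isLt⟩

lemma rhoF_le_iff {b : Fin m → ZMod 2} {a : ℕ} :
    rhoF b ≤ a ↔ ∀ j : Fin m, a ≤ j → b j = 0 := by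
  simp only [rhoF, Finset.sup_le_iff, mem_filter, mem_univ, true_and]
  exact forall_congr' fun j => by grind

lemma card_rhoF_le {a : ℕ} (ha : a ≤ m) : #{b : Fin m → ZMod 2 | rhoF b ≤ a} = 2 ^ a := by
  have box : ({b : Fin m → ZMod 2 | rhoF b ≤ a} : Finset _) =
      Fintype.piFinset fun j : Fin m => if (j : ℕ) < a then univ else {0} := by
    ext b
    simp only [mem_filter, mem_univ, true_and, rhoF_le_iff, Fintype.mem_piFinset]
    exact forall_congr' fun j => by split_ifs <;> simp <;> omega
  simp only [box, Fintype.card_piFinset, apply_ite card, card_univ, ZMod.card, card_singleton,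
    prod_ite, prod_const, one_pow, mul_one, Fin.card_filter_val_lt, min_eq_right ha]

lemma card_forall_rhoF_le {A : Fin s → ℕ} (hA : ∀ i, A i ≤ m) :
    #{mm : Fin s → Fin m → ZMod 2 | ∀ i, rhoF (mm i) ≤ A i} = 2 ^ a0F A := by
  have box : ({mm : Fin s → Fin m → ZMod 2 | ∀ i, rhoF (mm i) ≤ A i} : Finset _) =
      Fintype.piFinset fun i => {b : Fin m → ZMod 2 | rhoF b ≤ A i} := by
    ext mm
    simp
  rw [box, Fintype.card_piFinset, a0F, ← prod_pow_eq_pow_sum]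
  exact prod_congr rfl fun i _ => card_rhoF_le (hA i)

lemma dualBox_nonempty (C : Fin s → Matrix (Fin m) (Fin m) (ZMod 2)) {A : Fin s → ℕ}
    (hA : ∀ i, A i ≤ m) (hm : m < a0F A) : (dualBox m s C A).Nonempty := by
  have hcard : #(univ : Finset (Fin m → ZMod 2)) <
      #{mm : Fin s → Fin m → ZMod 2 | ∀ i, rhoF (mm i) ≤ A i} := by
    rw [card_forall_rhoF_le hA, card_univ, Fintype.card_fun, ZMod.card, Fintype.card_fin]
    exact Nat.pow_lt_pow_right one_lt_two hm
  obtain ⟨x, hx, y, hy, hxy, hfeq⟩ := exists_ne_map_eq_of_card_lt_of_maps_to hcard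
    (f := fun mm r => ∑ i, ∑ j, mm i j * C i j r) fun _ _ => mem_univ _
  simp only [mem_filter, mem_univ, true_and, rhoF_le_iff] at hx hy
  refine ⟨x - y, mem_filter.mpr ⟨?_, sub_ne_zero.mpr hxy, fun i => rhoF_le_iff.mpr ?_⟩⟩
  · rw [mem_dualNet_iff]
    intro r
    simpa [sub_mul, sub_eq_zero] using congrFun hfeq r
  · intro j hj
    simp [hx i j hj, hy i j hj]

def sumLevel (m s n : ℕ) : Finset (Fin s → ℕ) :=
  (Fintype.piFinset fun _ : Fin s => range (m + 1)).filter fun A => a0F A = n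

lemma sumLevel_subset_biUnion_indexSet (tm : ℕ) (hm : 2 ≤ m) :
    sumLevel m s (m + 1) ⊆ (Icc 1 m).biUnion (IndexSet m s tm) := by
  intro A hA
  obtain ⟨hpi, ha0⟩ := mem_filter.mp hA
  obtain ⟨i, hi⟩ : ∃ i, A i ≠ 0 := by
    by_contra! h
    simp [a0F, h] at ha0
  have hlog : 1 ≤ Real.logb 2 m := by
    rw [Real.le_logb_iff_rpow_le one_lt_two (by positivity), Real.rpow_one]
    exact_mod_cast hm
  refine mem_biUnion.mpr ⟨univ.sup A, mem_Icc.mpr ⟨?_, ?_⟩, mem_filter.mpr ⟨hpi, rfl, ?_, ?_⟩⟩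
  · exact (Nat.one_le_iff_ne_zero.mpr hi).trans (le_sup (mem_univ i))
  · exact Finset.sup_le fun i _ => le_of_mem_piFinset_range hpi i
  · rw [ha0]
    push_cast
    linarith [(Nat.cast_nonneg tm : (0 : ℝ) ≤ tm)]
  · rw [ha0, V0]
    push_cast
    linarith

lemma pow_le_card_sumLevel (hs : 2 ≤ s) : (m / s) ^ (s - 1) ≤ #(sumLevel m s (m + 1)) := by
  obtain ⟨n, rfl⟩ : ∃ n, s = n + 1 := ⟨s - 1, by omega⟩
  set q := m / (n + 1)
  have hqm : q * (n + 1) ≤ m := Nat.div_mul_le_self m (n + 1)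
  have maps : ∀ B ∈ Fintype.piFinset fun _ : Fin n => Icc 1 q,
      (Fin.snoc B (m + 1 - ∑ i, B i) : Fin (n + 1) → ℕ) ∈ sumLevel m (n + 1) (m + 1) := by
    intro B hB
    have hBi : ∀ i, 1 ≤ B i ∧ B i ≤ q := fun i => mem_Icc.mp (Fintype.mem_piFinset.mp hB i)
    have lower : n ≤ ∑ i, B i := by
      simpa using sum_le_sum fun i (_ : i ∈ univ) => (hBi i).1
    have upper : ∑ i, B i ≤ n * q := by
      simpa using sum_le_sum fun i (_ : i ∈ univ) => (hBi i).2
    have total : ∑ i, B i ≤ m := by nlinarith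
    refine mem_filter.mpr ⟨Fintype.mem_piFinset.mpr fun i => mem_range.mpr ?_, ?_⟩
    · refine Fin.lastCases ?_ (fun k => ?_) i
      · rw [Fin.snoc_last]
        omega
      · rw [Fin.snoc_castSucc]
        nlinarith [(hBi k).2]
    · rw [a0F, Fin.sum_univ_castSucc]
      simp only [Fin.snoc_castSucc, Fin.snoc_last]
      omega
  have inj : Set.InjOn (fun B : Fin n → ℕ => (Fin.snoc B (m + 1 - ∑ i, B i) : Fin (n + 1) → ℕ))
      (Fintype.piFinset fun _ : Fin n => Icc 1 q) := fun B _ B' _ h =>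
    funext fun i => by simpa using congrFun h i.castSucc
  calc (m / (n + 1)) ^ (n + 1 - 1) = #(Fintype.piFinset fun _ : Fin n => Icc 1 q) := by simp [q]
    _ ≤ _ := card_le_card_of_injOn _ maps inj

lemma pow_le_four_mul_pow_mul_pow_div (hs : 1 ≤ s) (hm : 2 * s ^ 2 ≤ m) :
    (m : ℝ) ^ (s - 1) ≤ 4 * (s : ℝ) ^ (s - 1) * ((m / s : ℕ) : ℝ) ^ (s - 1) := by
  obtain ⟨n, rfl⟩ : ∃ n, s = n + 1 := ⟨s - 1, by omega⟩
  rw [Nat.add_sub_cancel]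
  push_cast
  have hmR : 2 * ((n : ℝ) + 1) ^ 2 ≤ m := by exact_mod_cast hm
  have hm0 : (0 : ℝ) < m := by linarith [show (0 : ℝ) < 2 * ((n : ℝ) + 1) ^ 2 by positivity]
  have hdiv : (m : ℝ) - (n + 1) ≤ (n + 1) * ((m / (n + 1) : ℕ) : ℝ) := by
    have := Nat.lt_div_mul_add (a := m) (b := n + 1) (by omega)
    have : (m : ℝ) < ((m / (n + 1) : ℕ) : ℝ) * (n + 1) + (n + 1) := by exact_mod_cast this
    linarith
  have small : (n : ℝ) * ((n + 1) / m) ≤ 1 / 2 := by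
    rw [← mul_div_assoc, div_le_iff₀ hm0]
    nlinarith
  have le_one : (n + 1 : ℝ) / m ≤ 1 := by
    rw [div_le_one hm0]
    nlinarith
  have bernoulli : 1 + n * (-((n + 1) / m)) ≤ (1 + -((n + 1 : ℝ) / m)) ^ n :=
    one_add_mul_le_pow (by linarith) n
  calc (m : ℝ) ^ n ≤ 4 * ((m : ℝ) ^ n * (1 + -((n + 1 : ℝ) / m)) ^ n) := by
        nlinarith [pow_pos hm0 n]
    _ = 4 * ((m : ℝ) - (n + 1)) ^ n := by
        rw [← mul_pow]
        congr 2
        field_simp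
        ring
    _ ≤ 4 * ((n + 1) * ((m / (n + 1) : ℕ) : ℝ)) ^ n := by
        gcongr
        nlinarith
    _ = 4 * ((n : ℝ) + 1) ^ n * ((m / (n + 1) : ℕ) : ℝ) ^ n := by rw [mul_pow, mul_assoc]

lemma zpow_le_dualBox_weight (C : Fin s → Matrix (Fin m) (Fin m) (ZMod 2))
    {A : Fin s → ℕ} (hA : A ∈ sumLevel m s (m + 1)) :
    (2 : ℝ) ^ (-(2 * (s : ℤ) + 2)) ≤ dualWeight m s C A := by
  obtain ⟨hpi, ha0⟩ := mem_filter.mp hA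
  have hcard : (1 : ℝ) ≤ #(dualBox m s C A) := by
    exact_mod_cast (dualBox_nonempty C (le_of_mem_piFinset_range hpi) (by omega)).card_pos
  have hpow : ((2 : ℝ) ^ ((m : ℤ) - s - a0F A)) ^ 2 = 2 ^ (-(2 * (s : ℤ) + 2)) := by
    rw [← zpow_natCast, ← zpow_mul, ha0]
    push_cast
    ring_nf
  rw [dualWeight, hpow]
  exact le_mul_of_one_le_left (by positivity) hcard

end

/-- for all sufficiently large `m` (with threshold depending
only on `s`), `ρ̇_m² = E^{(m)}_{Y,T}(Ṡ_m²) ≥ 2^{-2s-4} s^{-s+1} m^{s-1}`. -/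
theorem statement17 (s : ℕ) (hs : 2 ≤ s) :
    ∃ m0 : ℕ, ∀ (m tm : ℕ), m0 ≤ m →
      ∀ C : Fin s → Matrix (Fin m) (Fin m) (ZMod 2),
        IsNet tm m s (fun n : Fin (2 ^ m) => netPoint m s C (n : ℕ)) →
        (tm : ℝ) ≤ Real.logb 2 m / 10 →
        (2 : ℝ) ^ (-(2 * (s : ℤ) + 4)) * (s : ℝ) ^ (-(s : ℤ) + 1) * (m : ℝ) ^ (s - 1) ≤
          Em m s fun t y => (∑ k ∈ Finset.Icc 1 m, DDk m s tm C k t y) ^ 2 := by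
  refine ⟨2 * s ^ 2, fun m tm hm C _ _ => ?_⟩
  have constants : (2 : ℝ) ^ (-(2 * (s : ℤ) + 4)) * (s : ℝ) ^ (-(s : ℤ) + 1) =
      2 ^ (-(2 * (s : ℤ) + 2)) / (4 * (s : ℝ) ^ (s - 1)) := by
    rw [show -(s : ℤ) + 1 = -((s - 1 : ℕ) : ℤ) by omega, zpow_neg (s : ℝ), zpow_natCast,
      show -(2 * (s : ℤ) + 4) = -(2 * s + 2) + (-2) by ring, zpow_add₀ two_ne_zero]
    field_simp
    norm_num
  rw [em_sq_sum_DDk, constants]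
  calc 2 ^ (-(2 * (s : ℤ) + 2)) / (4 * (s : ℝ) ^ (s - 1)) * (m : ℝ) ^ (s - 1)
      ≤ 2 ^ (-(2 * (s : ℤ) + 2)) * (m / s : ℕ) ^ (s - 1) := by
        rw [div_mul_eq_mul_div, div_le_iff₀ (by positivity), mul_assoc]
        gcongr
        linarith [pow_le_four_mul_pow_mul_pow_div (by omega) hm]
    _ ≤ ∑ _A ∈ sumLevel m s (m + 1), (2 : ℝ) ^ (-(2 * (s : ℤ) + 2)) := by
        rw [sum_const, nsmul_eq_mul, mul_comm]
        gcongr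
        exact_mod_cast pow_le_card_sumLevel hs
    _ ≤ ∑ A ∈ sumLevel m s (m + 1), dualWeight m s C A :=
        sum_le_sum fun A hA => zpow_le_dualBox_weight C hA
    _ ≤ _ := sum_le_sum_of_subset_of_nonneg (sumLevel_subset_biUnion_indexSet tm (by nlinarith))
        fun _ _ _ => by rw [dualWeight]; positivity
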